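/- Suppose all the links of X of dimension ≥ 1 (including X itself) are connected, and let 0 < λ ≤ 1. If μ_{n−1} ≤ λ/(1 + (n−1)λ), then X is a one-sided λ-local spectral expander; moreover, if additionally −λ/(1 + (n−1)λ) ≤ ν_{n−1}, then X is a two-sided λ-local spectral expander. -/

import Mathlib

/-!
Framework: a pure `n`-dimensional finite weighted simplicial complex, following
Kaufman–Oppenheim, "High Order Random Walks: Beyond Spectral Gap".

A complex is given by its finset of faces (finsets of a vertex type `V`) together with
a weight function `m`.  We index levels by **cardinality**: `X.K c` is the set of faces
with `c` elements, i.e. the set `X(k)` of `k`-dimensional faces for `k = c - 1`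
(so `X(-1) = X.K 0`, and a pure `n`-dimensional complex has top level `X.K (n+1)`).
-/

noncomputable section

open Finset

/-- The data of a weighted simplicial complex: a finite family of faces and a weight. -/
structure WSC (V : Type*) [DecidableEq V] where
  faces : Finset (Finset V)
  m : Finset V → ℝ

namespace WSC

variable {V : Type*} [DecidableEq V]

/-- `X.IsWSC n` : `X` is a pure `n`-dimensional finite weighted simplicial complex:
the faces form a nonempty downward-closed family, every face is contained in a face with
`n+1` elements (and no face has more), the weights are positive, and the weight of every
face of cardinality `≤ n` is the sum of the weights of the faces covering it. -/
def IsWSC (X : WSC V) (n : ℕ) : Prop :=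
  ∅ ∈ X.faces ∧
  (∀ ⦃σ τ : Finset V⦄, σ ∈ X.faces → τ ⊆ σ → τ ∈ X.faces) ∧
  (∀ ⦃σ⦄, σ ∈ X.faces → σ.card ≤ n + 1) ∧
  (∀ ⦃σ⦄, σ ∈ X.faces → ∃ η ∈ X.faces, σ ⊆ η ∧ η.card = n + 1) ∧
  (∀ ⦃σ⦄, σ ∈ X.faces → 0 < X.m σ) ∧
  (∀ ⦃τ⦄, τ ∈ X.faces → τ.card ≤ n →
    X.m τ = ∑ σ ∈ X.faces.filter (fun σ => τ ⊆ σ ∧ σ.card = τ.card + 1), X.m σ)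

/-- `X.K c` : the faces with `c` elements, i.e. `X(c-1)` in dimension indexing. -/
def K (X : WSC V) (c : ℕ) : Finset (Finset V) := X.faces.filter (fun σ => σ.card = c)

/-- The weighted inner product on cochains supported on the faces with `c` elements. -/
def inn (X : WSC V) (c : ℕ) (φ ψ : Finset V → ℝ) : ℝ :=
  ∑ σ ∈ X.K c, X.m σ * (φ σ * ψ σ)

/-- The squared norm of a cochain on the faces with `c` elements. -/
def normSq (X : WSC V) (c : ℕ) (φ : Finset V → ℝ) : ℝ := X.inn c φ φ

/-- The norm of a cochain on the faces with `c` elements. -/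
def norm (X : WSC V) (c : ℕ) (φ : Finset V → ℝ) : ℝ := Real.sqrt (X.normSq c φ)

/-- `X.cochainZero c φ` : φ belongs to `C^{c-1}_0 (X, ℝ)`, i.e. it is orthogonal to the
constant functions at level `c`. -/
def cochainZero (X : WSC V) (c : ℕ) (φ : Finset V → ℝ) : Prop :=
  ∑ σ ∈ X.K c, X.m σ * φ σ = 0

/-- The signless differential, from cochains at level `c` to cochains at level `c+1`:
`(d φ)(σ) = ∑_{τ ∈ X(c-1), τ ⊂ σ} φ(τ)`. -/
def d (X : WSC V) (c : ℕ) (φ : Finset V → ℝ) : Finset V → ℝ :=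
  fun σ => ∑ τ ∈ (X.K c).filter (fun τ => τ ⊆ σ), φ τ

/-- The (explicit formula for the) adjoint of the signless differential, from cochains at
level `c+1` to cochains at level `c`: `(d* ψ)(τ) = ∑_{σ ⊇ τ} (m σ / m τ) ψ(σ)`. -/
def dStar (X : WSC V) (c : ℕ) (ψ : Finset V → ℝ) : Finset V → ℝ :=
  fun τ => ∑ σ ∈ (X.K (c + 1)).filter (fun σ => τ ⊆ σ), (X.m σ / X.m τ) * ψ σ

/-- The (lazy) upper random walk operator `M⁺` on cochains at level `c`
(i.e. on `k`-cochains for `k = c-1`; note `k + 2 = c + 1`). -/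
def Mup (X : WSC V) (c : ℕ) (φ : Finset V → ℝ) : Finset V → ℝ :=
  fun τ => (1 / ((c : ℝ) + 1)) * φ τ +
    ∑ τ' ∈ (X.K c).filter (fun τ' => τ ∪ τ' ∈ X.K (c + 1)),
      (X.m (τ ∪ τ') / (((c : ℝ) + 1) * X.m τ)) * φ τ'

/-- The lower random walk operator `M⁻` on cochains at level `c`
(i.e. on `k`-cochains for `k = c-1`; note `k + 1 = c`). -/
def Mdown (X : WSC V) (c : ℕ) (φ : Finset V → ℝ) : Finset V → ℝ :=
  fun τ => (∑ η ∈ (X.K (c - 1)).filter (fun η => η ⊆ τ), X.m τ / ((c : ℝ) * X.m η)) * φ τ +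
    ∑ τ' ∈ (X.K c).filter (fun τ' => τ' ≠ τ ∧ τ ∩ τ' ∈ X.K (c - 1)),
      (X.m τ' / ((c : ℝ) * X.m (τ ∩ τ'))) * φ τ'

/-- The non-lazy upper random walk operator `(M')⁺ = ((k+2)/(k+1)) M⁺ - (1/(k+1)) I`
on cochains at level `c = k+1`. -/
def Mup' (X : WSC V) (c : ℕ) (φ : Finset V → ℝ) : Finset V → ℝ :=
  fun τ => (((c : ℝ) + 1) / (c : ℝ)) * X.Mup c φ τ - (1 / (c : ℝ)) * φ τ

/-- The link `X_τ` of a face `τ`, with the induced weight `m_τ (η) = m (τ ∪ η)`. -/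
def link (X : WSC V) (τ : Finset V) : WSC V where
  faces := X.faces.filter (fun η => η ∩ τ = ∅ ∧ τ ∪ η ∈ X.faces)
  m := fun η => X.m (τ ∪ η)

/-- The localization `φ_τ (η) = φ (τ ∪ η)` of a cochain `φ` to the link of `τ`. -/
def localize (φ : Finset V → ℝ) (τ : Finset V) : Finset V → ℝ := fun η => φ (τ ∪ η)

/-- The underlying graph (1-skeleton) of a complex. -/
def skeleton (Y : WSC V) : SimpleGraph {v : V // ({v} : Finset V) ∈ Y.faces} where
  Adj u w := u ≠ w ∧ ({(u : V), (w : V)} : Finset V) ∈ Y.faces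
  symm := by
    constructor
    intro u w h
    refine ⟨h.1.symm, ?_⟩
    rw [Finset.pair_comm]
    exact h.2
  loopless := by constructor; intro u h; exact h.1 rfl

/-- All links of `X` of dimension `≥ 1` (including `X` itself, as the link of `∅`)
have a connected underlying graph. -/
def LinksConnected (X : WSC V) (n : ℕ) : Prop :=
  ∀ c < n, ∀ τ ∈ X.K c, (X.link τ).skeleton.Connected

/-- The second largest eigenvalue of the self-adjoint operator `(M')⁺₀` on `C⁰(Y, ℝ)`,
via its Rayleigh-quotient characterization over the orthogonal complement of the
constant functions (the top eigenfunction). -/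
def secondEig (Y : WSC V) : ℝ :=
  sSup {r : ℝ | ∃ ψ : Finset V → ℝ, Y.normSq 1 ψ ≠ 0 ∧
    (∑ v ∈ Y.K 1, Y.m v * ψ v) = 0 ∧ r = Y.inn 1 (Y.Mup' 1 ψ) ψ / Y.normSq 1 ψ}

/-- The smallest eigenvalue of the self-adjoint operator `(M')⁺₀` on `C⁰(Y, ℝ)`,
via its Rayleigh-quotient characterization. -/
def smallestEig (Y : WSC V) : ℝ :=
  sInf {r : ℝ | ∃ ψ : Finset V → ℝ, Y.normSq 1 ψ ≠ 0 ∧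
    r = Y.inn 1 (Y.Mup' 1 ψ) ψ / Y.normSq 1 ψ}

/-- `μ_k = max_{τ ∈ X(k-1)} μ_τ` where `μ_τ` is the second largest eigenvalue of
`(M')⁺_{τ,0}`; faces `τ ∈ X(k-1)` have `k` elements. -/
def mu (X : WSC V) (k : ℕ) : ℝ :=
  sSup {r : ℝ | ∃ τ ∈ X.K k, r = (X.link τ).secondEig}

/-- `ν_k = min_{τ ∈ X(k-1)} ν_τ` where `ν_τ` is the smallest eigenvalue of
`(M')⁺_{τ,0}`; faces `τ ∈ X(k-1)` have `k` elements. -/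
def nu (X : WSC V) (k : ℕ) : ℝ :=
  sInf {r : ℝ | ∃ τ ∈ X.K k, r = (X.link τ).smallestEig}

/-- `X` is a one-sided `λ`-local spectral expander: `μ_k ≤ λ` for every `0 ≤ k ≤ n-1`. -/
def OneSided (X : WSC V) (n : ℕ) (lam : ℝ) : Prop := ∀ k < n, X.mu k ≤ lam

/-- `X` is a two-sided `λ`-local spectral expander: `μ_k ≤ λ` and `ν_k ≥ -λ`
for every `0 ≤ k ≤ n-1`. -/
def TwoSided (X : WSC V) (n : ℕ) (lam : ℝ) : Prop :=
  ∀ k < n, X.mu k ≤ lam ∧ -lam ≤ X.nu k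

end WSC

/-!
Garland's method. For a vertex `u` of a complex `Y` of dimension at least two, the
`m_u`-weighted mean of `φ ∈ C⁰(Y)` over the link `Y_u` is `(M'φ)(u)`. Splitting off this mean
link by link and summing over `u` writes both `⟨M'φ, φ⟩` (the edge form) and `‖φ‖²` as
`‖M'φ‖²` plus the corresponding quantities of mean-zero functions on the links. A bound `μ` on
the links therefore gives `⟨M'φ, φ⟩ ≤ ‖M'φ‖² + μ (‖φ‖² - ‖M'φ‖²)`. At a unit maximiser `φ` of
the Rayleigh quotient on mean-zero functions, first-order optimality gives `‖M'φ‖² = M²` for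
`M := ⟨M'φ, φ⟩`, and connectedness of the skeleton gives `M < 1`; hence `M ≤ μ / (1 - μ)`.
For the lower bound, Cauchy–Schwarz `⟨M'φ, φ⟩² ≤ ‖M'φ‖² ‖φ‖²` takes the place of the
maximiser. Finally `x ↦ x / (1 - x)` sends `λ / (1 + (k+1)λ)` to `λ / (1 + kλ)` and
`-λ / (1 + (k+1)λ)` to `-λ / (1 + (k+2)λ)`, so the bounds on the top links trickle down to all
levels.
-/

namespace WSC

variable {V : Type*} [DecidableEq V] {Y : WSC V} {d : ℕ}

lemma mem_K {σ : Finset V} {c : ℕ} : σ ∈ Y.K c ↔ σ ∈ Y.faces ∧ σ.card = c := mem_filter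

lemma IsWSC.m_pos (hY : Y.IsWSC d) {σ : Finset V} {c : ℕ} (hσ : σ ∈ Y.K c) : 0 < Y.m σ :=
  hY.2.2.2.2.1 (mem_K.1 hσ).1

lemma IsWSC.m_eq_sum_union (hY : Y.IsWSC d) {σ : Finset V} {c : ℕ} (hσ : σ ∈ Y.K c)
    (hc : c ≤ d) :
    Y.m σ = ∑ u ∈ (Y.K 1).filter (fun u => σ ∪ u ∈ Y.K (c + 1)), Y.m (σ ∪ u) := by
  obtain ⟨hσf, rfl⟩ := mem_K.1 hσ
  rw [hY.2.2.2.2.2 hσf hc]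
  refine sum_nbij' (fun t => t \ σ) (fun u => σ ∪ u) ?_ ?_ ?_ ?_ ?_
  · intro t ht
    obtain ⟨htf, hσt, hcard⟩ := mem_filter.1 ht
    refine mem_filter.2 ⟨mem_K.2 ⟨hY.2.1 htf sdiff_subset, ?_⟩, ?_⟩
    · rw [card_sdiff_of_subset hσt]; omega
    · rw [union_sdiff_of_subset hσt]; exact mem_K.2 ⟨htf, hcard⟩
  · intro u hu
    obtain ⟨-, hσu⟩ := mem_filter.1 hu
    exact mem_filter.2 ⟨(mem_K.1 hσu).1, subset_union_left, (mem_K.1 hσu).2⟩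
  · intro t ht
    exact union_sdiff_of_subset (mem_filter.1 ht).2.1
  · intro u hu
    obtain ⟨hu1, hσu⟩ := mem_filter.1 hu
    have hcap := card_union_add_card_inter σ u
    rw [(mem_K.1 hu1).2, (mem_K.1 hσu).2] at hcap
    exact union_sdiff_cancel_left (disjoint_iff_inter_eq_empty.2 (card_eq_zero.1 (by omega)))
  · intro t ht
    rw [union_sdiff_of_subset (mem_filter.1 ht).2.1]

lemma IsWSC.m_empty (hY : Y.IsWSC d) : Y.m ∅ = ∑ v ∈ Y.K 1, Y.m v := by
  rw [hY.m_eq_sum_union (mem_K.2 ⟨hY.1, card_empty⟩) d.zero_le]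
  simp only [empty_union, filter_true_of_mem fun _ h => h]

def neighbors (Y : WSC V) (τ : Finset V) : Finset (Finset V) :=
  (Y.K 1).filter (fun τ' => τ ∪ τ' ∈ Y.K 2)

lemma mem_neighbors {τ τ' : Finset V} : τ' ∈ Y.neighbors τ ↔ τ' ∈ Y.K 1 ∧ τ ∪ τ' ∈ Y.K 2 :=
  mem_filter

lemma IsWSC.m_eq_sum_neighbors (hY : Y.IsWSC d) (hd : 1 ≤ d) {τ : Finset V}
    (hτ : τ ∈ Y.K 1) : Y.m τ = ∑ τ' ∈ Y.neighbors τ, Y.m (τ ∪ τ') :=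
  hY.m_eq_sum_union hτ hd

lemma sum_neighbors_comm (f : Finset V → Finset V → ℝ) :
    ∑ τ ∈ Y.K 1, ∑ τ' ∈ Y.neighbors τ, f τ τ' = ∑ τ ∈ Y.K 1, ∑ τ' ∈ Y.neighbors τ, f τ' τ := by
  simp only [neighbors, sum_filter]
  rw [sum_comm]
  simp only [union_comm]

lemma IsWSC.sum_neighbors_mul_left (hY : Y.IsWSC d) (hd : 1 ≤ d) (f : Finset V → ℝ) :
    ∑ τ ∈ Y.K 1, ∑ τ' ∈ Y.neighbors τ, Y.m (τ ∪ τ') * f τ = ∑ τ ∈ Y.K 1, Y.m τ * f τ :=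
  sum_congr rfl fun τ hτ => by rw [← sum_mul, ← hY.m_eq_sum_neighbors hd hτ]

lemma IsWSC.sum_neighbors_mul_right (hY : Y.IsWSC d) (hd : 1 ≤ d) (f : Finset V → ℝ) :
    ∑ τ ∈ Y.K 1, ∑ τ' ∈ Y.neighbors τ, Y.m (τ ∪ τ') * f τ' = ∑ τ ∈ Y.K 1, Y.m τ * f τ := by
  rw [sum_neighbors_comm, ← hY.sum_neighbors_mul_left hd f]
  simp only [union_comm]

def edgeForm (Y : WSC V) (φ ψ : Finset V → ℝ) : ℝ :=
  ∑ τ ∈ Y.K 1, ∑ τ' ∈ Y.neighbors τ, Y.m (τ ∪ τ') * (φ τ * ψ τ')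

lemma edgeForm_comm (φ ψ : Finset V → ℝ) : Y.edgeForm φ ψ = Y.edgeForm ψ φ := by
  rw [edgeForm, sum_neighbors_comm]
  simp only [edgeForm, union_comm, mul_comm (φ _)]

lemma Mup'_one_apply (φ : Finset V → ℝ) (τ : Finset V) :
    Y.Mup' 1 φ τ = ∑ τ' ∈ Y.neighbors τ, Y.m (τ ∪ τ') / Y.m τ * φ τ' := by
  simp only [Mup', Mup, neighbors, Nat.cast_one, one_add_one_eq_two, mul_add, mul_sum]
  ring_nf
  refine sum_congr rfl fun τ' _ => ?_
  ring

lemma IsWSC.m_mul_Mup'_one (hY : Y.IsWSC d) {τ : Finset V} (hτ : τ ∈ Y.K 1)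
    (φ : Finset V → ℝ) :
    Y.m τ * Y.Mup' 1 φ τ = ∑ τ' ∈ Y.neighbors τ, Y.m (τ ∪ τ') * φ τ' := by
  have := (hY.m_pos hτ).ne'
  rw [Mup'_one_apply, mul_sum]
  refine sum_congr rfl fun τ' _ => ?_
  field_simp

lemma IsWSC.inn_Mup'_one (hY : Y.IsWSC d) (φ ψ : Finset V → ℝ) :
    Y.inn 1 (Y.Mup' 1 φ) ψ = Y.edgeForm ψ φ := by
  refine sum_congr rfl fun τ hτ => ?_
  rw [show Y.m τ * (Y.Mup' 1 φ τ * ψ τ) = ψ τ * (Y.m τ * Y.Mup' 1 φ τ) by ring,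
    hY.m_mul_Mup'_one hτ, mul_sum]
  exact sum_congr rfl fun τ' _ => by ring

lemma IsWSC.cochainZero_Mup'_one (hY : Y.IsWSC d) (hd : 1 ≤ d) {φ : Finset V → ℝ}
    (hφ : Y.cochainZero 1 φ) : Y.cochainZero 1 (Y.Mup' 1 φ) := by
  rw [cochainZero, sum_congr rfl fun τ hτ => hY.m_mul_Mup'_one hτ φ,
    hY.sum_neighbors_mul_right hd]
  exact hφ

lemma IsWSC.normSq_nonneg (hY : Y.IsWSC d) (c : ℕ) (φ : Finset V → ℝ) : 0 ≤ Y.normSq c φ :=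
  sum_nonneg fun _ hσ => mul_nonneg (hY.m_pos hσ).le (mul_self_nonneg _)

lemma IsWSC.eq_zero_of_normSq_eq_zero (hY : Y.IsWSC d) {c : ℕ} {φ : Finset V → ℝ}
    (h : Y.normSq c φ = 0) {σ : Finset V} (hσ : σ ∈ Y.K c) : φ σ = 0 := by
  have := (sum_eq_zero_iff_of_nonneg fun σ hσ =>
    mul_nonneg (hY.m_pos hσ).le (mul_self_nonneg (φ σ))).1 h σ hσ
  simpa [(hY.m_pos hσ).ne'] using this

lemma IsWSC.inn_sq_le (hY : Y.IsWSC d) (c : ℕ) (φ ψ : Finset V → ℝ) :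
    Y.inn c φ ψ ^ 2 ≤ Y.normSq c φ * Y.normSq c ψ :=
  sum_sq_le_sum_mul_sum_of_sq_le_mul _
    (fun σ hσ => mul_nonneg (hY.m_pos hσ).le (mul_self_nonneg _))
    (fun σ hσ => mul_nonneg (hY.m_pos hσ).le (mul_self_nonneg _)) fun σ _ => le_of_eq (by ring)

lemma IsWSC.sum_neighbors_sub_sq (hY : Y.IsWSC d) (hd : 1 ≤ d) (φ : Finset V → ℝ) :
    ∑ τ ∈ Y.K 1, ∑ τ' ∈ Y.neighbors τ, Y.m (τ ∪ τ') * (φ τ - φ τ') ^ 2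
      = 2 * (Y.normSq 1 φ - Y.edgeForm φ φ) := by
  have key : ∀ τ τ', Y.m (τ ∪ τ') * (φ τ - φ τ') ^ 2 = Y.m (τ ∪ τ') * (φ τ * φ τ)
      + Y.m (τ ∪ τ') * (φ τ' * φ τ') - 2 * (Y.m (τ ∪ τ') * (φ τ * φ τ')) := fun _ _ => by ring
  simp only [key, sum_add_distrib, sum_sub_distrib, ← mul_sum, hY.sum_neighbors_mul_left hd,
    hY.sum_neighbors_mul_right hd (fun τ => φ τ * φ τ)]
  rw [normSq, inn, edgeForm]
  ring

lemma IsWSC.sum_neighbors_add_sq (hY : Y.IsWSC d) (hd : 1 ≤ d) (φ : Finset V → ℝ) :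
    ∑ τ ∈ Y.K 1, ∑ τ' ∈ Y.neighbors τ, Y.m (τ ∪ τ') * (φ τ + φ τ') ^ 2
      = 2 * (Y.normSq 1 φ + Y.edgeForm φ φ) := by
  have key : ∀ τ τ', Y.m (τ ∪ τ') * (φ τ + φ τ') ^ 2 = Y.m (τ ∪ τ') * (φ τ * φ τ)
      + Y.m (τ ∪ τ') * (φ τ' * φ τ') + 2 * (Y.m (τ ∪ τ') * (φ τ * φ τ')) := fun _ _ => by ring
  simp only [key, sum_add_distrib, ← mul_sum, hY.sum_neighbors_mul_left hd,
    hY.sum_neighbors_mul_right hd (fun τ => φ τ * φ τ)]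
  rw [normSq, inn, edgeForm]
  ring

lemma IsWSC.sum_neighbors_mul_nonneg (hY : Y.IsWSC d) {g : Finset V → Finset V → ℝ}
    (hg : ∀ τ τ', 0 ≤ g τ τ') :
    0 ≤ ∑ τ ∈ Y.K 1, ∑ τ' ∈ Y.neighbors τ, Y.m (τ ∪ τ') * g τ τ' :=
  sum_nonneg fun _ _ => sum_nonneg fun _ hτ' =>
    mul_nonneg (hY.m_pos (mem_neighbors.1 hτ').2).le (hg _ _)

lemma IsWSC.edgeForm_le_normSq (hY : Y.IsWSC d) (hd : 1 ≤ d) (φ : Finset V → ℝ) :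
    Y.edgeForm φ φ ≤ Y.normSq 1 φ := by
  have := hY.sum_neighbors_sub_sq hd φ ▸ hY.sum_neighbors_mul_nonneg fun _ _ => sq_nonneg _
  linarith

lemma IsWSC.neg_normSq_le_edgeForm (hY : Y.IsWSC d) (hd : 1 ≤ d) (φ : Finset V → ℝ) :
    -Y.normSq 1 φ ≤ Y.edgeForm φ φ := by
  have := hY.sum_neighbors_add_sq hd φ ▸ hY.sum_neighbors_mul_nonneg fun _ _ => sq_nonneg _
  linarith

lemma mem_link_faces {τ η : Finset V} :
    η ∈ (Y.link τ).faces ↔ η ∈ Y.faces ∧ η ∩ τ = ∅ ∧ τ ∪ η ∈ Y.faces :=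
  mem_filter

lemma link_m (τ η : Finset V) : (Y.link τ).m η = Y.m (τ ∪ η) := rfl

lemma disjoint_of_mem_link_faces {τ η : Finset V} (h : η ∈ (Y.link τ).faces) : Disjoint τ η :=
  disjoint_iff_inter_eq_empty.2 (inter_comm τ η ▸ (mem_link_faces.1 h).2.1)

lemma mem_link_faces_sdiff (hY : Y.IsWSC d) {τ σ : Finset V} (hσ : σ ∈ Y.faces) (hτσ : τ ⊆ σ) :
    σ \ τ ∈ (Y.link τ).faces :=
  mem_link_faces.2 ⟨hY.2.1 hσ sdiff_subset, sdiff_inter_self τ σ,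
    (union_sdiff_of_subset hτσ).symm ▸ hσ⟩

lemma card_union_of_mem_link_faces {τ η : Finset V} (hη : η ∈ (Y.link τ).faces) :
    (τ ∪ η).card = τ.card + η.card :=
  card_union_of_disjoint (disjoint_of_mem_link_faces hη)

lemma IsWSC.link_m_eq_sum (hY : Y.IsWSC d) {τ η : Finset V} (hη : η ∈ (Y.link τ).faces)
    (hηc : τ.card + η.card ≤ d) :
    (Y.link τ).m η = ∑ σ ∈ (Y.link τ).faces.filter (fun σ => η ⊆ σ ∧ σ.card = η.card + 1),
      (Y.link τ).m σ := by
  rw [link_m, hY.2.2.2.2.2 (mem_link_faces.1 hη).2.2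
    (by rw [card_union_of_mem_link_faces hη]; omega)]
  refine sum_nbij' (fun σ => σ \ τ) (fun σ => τ ∪ σ) ?_ ?_ ?_ ?_ ?_
  · intro σ hσ
    obtain ⟨hσf, hησ, hσc⟩ := mem_filter.1 hσ
    have hτσ : τ ⊆ σ := subset_union_left.trans hησ
    refine mem_filter.2 ⟨mem_link_faces_sdiff hY hσf hτσ,
      subset_sdiff.2 ⟨subset_union_right.trans hησ, (disjoint_of_mem_link_faces hη).symm⟩, ?_⟩
    rw [card_sdiff_of_subset hτσ, hσc, card_union_of_mem_link_faces hη]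
    omega
  · intro σ hσ
    obtain ⟨hσl, hησ, hσc⟩ := mem_filter.1 hσ
    refine mem_filter.2 ⟨(mem_link_faces.1 hσl).2.2, union_subset_union_right hησ, ?_⟩
    rw [card_union_of_mem_link_faces hσl, card_union_of_mem_link_faces hη, hσc]
    omega
  · intro σ hσ
    exact union_sdiff_of_subset (subset_union_left.trans (mem_filter.1 hσ).2.1)
  · intro σ hσ
    exact union_sdiff_cancel_left (disjoint_of_mem_link_faces (mem_filter.1 hσ).1)
  · intro σ hσ
    rw [link_m, union_sdiff_of_subset (subset_union_left.trans (mem_filter.1 hσ).2.1)]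

lemma IsWSC.link (hY : Y.IsWSC d) {τ : Finset V} {c : ℕ} (hτ : τ ∈ Y.K c) (hc : c ≤ d) :
    (Y.link τ).IsWSC (d - c) := by
  obtain ⟨hτf, hτc⟩ := mem_K.1 hτ
  have ⟨hemp, hdown, hcard, hpure, hpos, _⟩ := hY
  refine ⟨mem_link_faces.2 ⟨hemp, empty_inter τ, (union_empty τ).symm ▸ hτf⟩, ?_, ?_, ?_, ?_,
    fun η hη hηc => hY.link_m_eq_sum hη (by omega)⟩
  · intro σ η hσ hησ
    obtain ⟨h1, h2, h3⟩ := mem_link_faces.1 hσ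
    exact mem_link_faces.2 ⟨hdown h1 hησ, subset_empty.1 (h2 ▸ inter_subset_inter_right hησ),
      hdown h3 (union_subset_union_right hησ)⟩
  · intro η hη
    have := hcard (mem_link_faces.1 hη).2.2
    rw [card_union_of_mem_link_faces hη] at this
    omega
  · intro η hη
    obtain ⟨σ, hσf, hησ, hσc⟩ := hpure (mem_link_faces.1 hη).2.2
    have hτσ : τ ⊆ σ := subset_union_left.trans hησ
    refine ⟨σ \ τ, mem_link_faces_sdiff hY hσf hτσ,
      subset_sdiff.2 ⟨subset_union_right.trans hησ, (disjoint_of_mem_link_faces hη).symm⟩, ?_⟩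
    rw [card_sdiff_of_subset hτσ]
    omega
  · intro η hη
    exact hpos (mem_link_faces.1 hη).2.2

lemma link_link (hY : Y.IsWSC d) {τ u : Finset V} (hu : u ∈ (Y.link τ).faces) :
    (Y.link τ).link u = Y.link (τ ∪ u) := by
  obtain ⟨-, huτ, hτu⟩ := mem_link_faces.1 hu
  simp only [WSC.link, mk.injEq, union_assoc, and_true]
  ext η
  simp only [mem_filter, inter_union_distrib_left, union_eq_empty]
  constructor
  · rintro ⟨⟨hη, hητ, -⟩, hηu, -, -, h⟩
    exact ⟨hη, ⟨hητ, hηu⟩, h⟩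
  · rintro ⟨hη, ⟨hητ, hηu⟩, h⟩
    refine ⟨⟨hη, hητ, hY.2.1 h (union_subset_union_right subset_union_right)⟩, hηu,
      hY.2.1 h ?_, ?_, h⟩
    · exact union_subset (subset_union_left.trans subset_union_right)
        (subset_union_right.trans subset_union_right)
    · rw [union_inter_distrib_right, huτ, hητ, union_empty]

lemma mem_link_K {τ σ : Finset V} {k c : ℕ} (hτ : τ ∈ Y.K k) :
    σ ∈ (Y.link τ).K c ↔ σ ∈ Y.K c ∧ τ ∪ σ ∈ Y.K (k + c) := by
  obtain ⟨-, hτc⟩ := mem_K.1 hτ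
  constructor
  · intro h
    obtain ⟨hσl, hσc⟩ := mem_K.1 h
    obtain ⟨hσf, -, hτσ⟩ := mem_link_faces.1 hσl
    exact ⟨mem_K.2 ⟨hσf, hσc⟩,
      mem_K.2 ⟨hτσ, by rw [card_union_of_disjoint (disjoint_of_mem_link_faces hσl)]; omega⟩⟩
  · rintro ⟨hσ, hτσ⟩
    obtain ⟨hσf, hσc⟩ := mem_K.1 hσ
    obtain ⟨hτσf, hτσc⟩ := mem_K.1 hτσ
    have hcap := card_union_add_card_inter τ σ
    have hdisj : σ ∩ τ = ∅ := inter_comm τ σ ▸ card_eq_zero.1 (by omega)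
    exact mem_K.2 ⟨mem_link_faces.2 ⟨hσf, hdisj, hτσf⟩, hσc⟩

lemma link_K_one {u : Finset V} (hu : u ∈ Y.K 1) : (Y.link u).K 1 = Y.neighbors u := by
  ext v
  rw [mem_link_K hu, mem_neighbors]

lemma IsWSC.sum_link_normSq (hY : Y.IsWSC d) (hd : 1 ≤ d) (φ : Finset V → ℝ) :
    ∑ u ∈ Y.K 1, (Y.link u).normSq 1 φ = Y.normSq 1 φ := by
  rw [normSq, inn, ← hY.sum_neighbors_mul_right hd]
  exact sum_congr rfl fun u hu => by rw [normSq, inn, link_K_one hu]; rfl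

/-- Lets the edge forms of `Y` and of its vertex links be summed over the common index set
`Y.K 1`. -/
lemma IsWSC.edgeForm_eq_sum_ite (hY : Y.IsWSC d) {S : Finset (Finset V)} (hS : Y.K 1 ⊆ S)
    (hS1 : ∀ v ∈ S, v.card = 1) (φ ψ : Finset V → ℝ) :
    Y.edgeForm φ ψ = ∑ v ∈ S, ∑ w ∈ S,
      if v ∪ w ∈ Y.K 2 then Y.m (v ∪ w) * (φ v * ψ w) else 0 := by
  have vertex_of_edge {v w : Finset V} (hv : v ∈ S) (hw : w ∈ S) (h : v ∪ w ∈ Y.K 2) :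
      v ∈ Y.K 1 ∧ w ∈ Y.K 1 :=
    ⟨mem_K.2 ⟨hY.2.1 (mem_K.1 h).1 subset_union_left, hS1 v hv⟩,
      mem_K.2 ⟨hY.2.1 (mem_K.1 h).1 subset_union_right, hS1 w hw⟩⟩
  simp only [edgeForm, neighbors, sum_filter]
  refine (sum_congr rfl fun v hv => ?_).trans (sum_subset hS fun v hv hv1 =>
    sum_eq_zero fun w hw => if_neg fun h => hv1 (vertex_of_edge hv hw h).1)
  exact sum_subset hS fun w hw hw1 => if_neg fun h => hw1 (vertex_of_edge (hS hv) hw h).2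

lemma IsWSC.sum_link_edgeForm (hY : Y.IsWSC d) (hd : 2 ≤ d) (φ : Finset V → ℝ) :
    ∑ u ∈ Y.K 1, (Y.link u).edgeForm φ φ = Y.edgeForm φ φ := by
  have hS1 : ∀ v ∈ Y.K 1, v.card = 1 := fun v hv => (mem_K.1 hv).2
  have hlink (u) (hu : u ∈ Y.K 1) := (hY.link hu (by omega)).edgeForm_eq_sum_ite
    (fun v hv => ((mem_link_K hu).1 hv).1) hS1 φ φ
  rw [sum_congr rfl hlink, hY.edgeForm_eq_sum_ite subset_rfl hS1, sum_comm]
  refine sum_congr rfl fun v _ => ?_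
  rw [sum_comm]
  refine sum_congr rfl fun w _ => ?_
  have hcond (u) (hu : u ∈ Y.K 1) :
      (if v ∪ w ∈ (Y.link u).K 2 then (Y.link u).m (v ∪ w) * (φ v * φ w) else 0)
        = if v ∪ w ∈ Y.K 2 then
            (if v ∪ w ∪ u ∈ Y.K (2 + 1) then Y.m (v ∪ w ∪ u) else 0) * (φ v * φ w) else 0 := by
    simp only [mem_link_K hu, link_m, ite_and, union_comm u, ite_zero_mul, add_comm 1 2]
  rw [sum_congr rfl hcond]
  split_ifs with hvw
  · rw [← sum_mul, ← sum_filter, ← hY.m_eq_sum_union hvw hd]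
  · exact sum_const_zero

lemma IsWSC.sum_link_mul (hY : Y.IsWSC d) {u : Finset V} (hu : u ∈ Y.K 1)
    (φ : Finset V → ℝ) :
    ∑ v ∈ (Y.link u).K 1, (Y.link u).m v * φ v = Y.m u * Y.Mup' 1 φ u := by
  rw [link_K_one hu, hY.m_mul_Mup'_one hu]
  rfl

lemma IsWSC.normSq_eq_sub_const (hY : Y.IsWSC d) {φ : Finset V → ℝ} {c : ℝ}
    (h : Y.cochainZero 1 fun σ => φ σ - c) :
    Y.normSq 1 φ = Y.normSq 1 (fun σ => φ σ - c) + c ^ 2 * Y.m ∅ := by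
  have key : ∀ σ, Y.m σ * (φ σ * φ σ) = Y.m σ * ((φ σ - c) * (φ σ - c))
      + 2 * c * (Y.m σ * (φ σ - c)) + c ^ 2 * Y.m σ := fun _ => by ring
  have h' : ∑ σ ∈ Y.K 1, Y.m σ * (φ σ - c) = 0 := h
  rw [normSq, inn, sum_congr rfl fun σ _ => key σ, sum_add_distrib, sum_add_distrib,
    ← mul_sum, ← mul_sum, ← hY.m_empty, h']
  simp [normSq, inn]

lemma IsWSC.edgeForm_eq_sub_const (hY : Y.IsWSC d) (hd : 1 ≤ d) {φ : Finset V → ℝ} {c : ℝ}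
    (h : Y.cochainZero 1 fun σ => φ σ - c) :
    Y.edgeForm φ φ = Y.edgeForm (fun σ => φ σ - c) (fun σ => φ σ - c) + c ^ 2 * Y.m ∅ := by
  have key : ∀ τ τ', Y.m (τ ∪ τ') * (φ τ * φ τ')
      = Y.m (τ ∪ τ') * ((φ τ - c) * (φ τ' - c)) + c * (Y.m (τ ∪ τ') * (φ τ - c))
        + c * (Y.m (τ ∪ τ') * (φ τ' - c)) + c ^ 2 * Y.m (τ ∪ τ') := fun _ _ => by ring
  have h' : ∑ σ ∈ Y.K 1, Y.m σ * (φ σ - c) = 0 := h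
  simp only [edgeForm, key, sum_add_distrib, ← mul_sum, hY.sum_neighbors_mul_left hd,
    hY.sum_neighbors_mul_right hd fun σ => φ σ - c]
  rw [hY.m_empty, ← sum_congr rfl fun τ hτ => hY.m_eq_sum_neighbors hd hτ, h']
  ring

lemma IsWSC.cochainZero_link_sub_Mup'_one (hY : Y.IsWSC d) (hd : 1 ≤ d) {u : Finset V}
    (hu : u ∈ Y.K 1) (φ : Finset V → ℝ) :
    (Y.link u).cochainZero 1 fun σ => φ σ - Y.Mup' 1 φ u := by
  have hmass : ∑ v ∈ (Y.link u).K 1, (Y.link u).m v = Y.m u := by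
    rw [← (hY.link hu hd).m_empty, link_m, union_empty]
  rw [cochainZero]
  simp only [mul_sub, sum_sub_distrib, ← sum_mul]
  rw [hmass, hY.sum_link_mul hu, sub_self]

lemma IsWSC.normSq_eq_sum_link (hY : Y.IsWSC d) (hd : 1 ≤ d) (φ : Finset V → ℝ) :
    Y.normSq 1 φ = Y.normSq 1 (Y.Mup' 1 φ)
      + ∑ u ∈ Y.K 1, (Y.link u).normSq 1 fun σ => φ σ - Y.Mup' 1 φ u := by
  conv_lhs => rw [← hY.sum_link_normSq hd]
  rw [normSq, inn, ← sum_add_distrib]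
  refine sum_congr rfl fun u hu => ?_
  rw [(hY.link hu hd).normSq_eq_sub_const (hY.cochainZero_link_sub_Mup'_one hd hu φ), link_m,
    union_empty]
  ring

lemma IsWSC.edgeForm_eq_sum_link (hY : Y.IsWSC d) (hd : 2 ≤ d) (φ : Finset V → ℝ) :
    Y.edgeForm φ φ = Y.normSq 1 (Y.Mup' 1 φ)
      + ∑ u ∈ Y.K 1, (Y.link u).edgeForm (fun σ => φ σ - Y.Mup' 1 φ u)
          (fun σ => φ σ - Y.Mup' 1 φ u) := by
  rw [← hY.sum_link_edgeForm hd, normSq, inn, ← sum_add_distrib]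
  refine sum_congr rfl fun u hu => ?_
  rw [(hY.link hu (by omega)).edgeForm_eq_sub_const (by omega)
    (hY.cochainZero_link_sub_Mup'_one (by omega) hu φ), link_m, union_empty]
  ring

lemma IsWSC.edgeForm_le_of_links (hY : Y.IsWSC d) (hd : 2 ≤ d) {μ : ℝ}
    (hlinks : ∀ u ∈ Y.K 1, ∀ ψ, (Y.link u).cochainZero 1 ψ →
      (Y.link u).edgeForm ψ ψ ≤ μ * (Y.link u).normSq 1 ψ) (φ : Finset V → ℝ) :
    Y.edgeForm φ φ ≤ Y.normSq 1 (Y.Mup' 1 φ) + μ * (Y.normSq 1 φ - Y.normSq 1 (Y.Mup' 1 φ)) := by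
  rw [hY.edgeForm_eq_sum_link hd, hY.normSq_eq_sum_link (by omega) φ, add_sub_cancel_left,
    mul_sum]
  gcongr with u hu
  exact hlinks u hu _ (hY.cochainZero_link_sub_Mup'_one (by omega) hu φ)

lemma IsWSC.le_edgeForm_of_links (hY : Y.IsWSC d) (hd : 2 ≤ d) {ν : ℝ}
    (hlinks : ∀ u ∈ Y.K 1, ∀ ψ, (Y.link u).cochainZero 1 ψ →
      ν * (Y.link u).normSq 1 ψ ≤ (Y.link u).edgeForm ψ ψ) (φ : Finset V → ℝ) :
    Y.normSq 1 (Y.Mup' 1 φ) + ν * (Y.normSq 1 φ - Y.normSq 1 (Y.Mup' 1 φ)) ≤ Y.edgeForm φ φ := by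
  rw [hY.edgeForm_eq_sum_link hd, hY.normSq_eq_sum_link (by omega) φ, add_sub_cancel_left,
    mul_sum]
  gcongr with u hu
  exact hlinks u hu _ (hY.cochainZero_link_sub_Mup'_one (by omega) hu φ)

lemma IsWSC.eq_of_edgeForm_eq_normSq (hY : Y.IsWSC d) (hd : 1 ≤ d) {φ : Finset V → ℝ}
    (h : Y.edgeForm φ φ = Y.normSq 1 φ) {τ τ' : Finset V} (hτ : τ ∈ Y.K 1)
    (hτ' : τ' ∈ Y.neighbors τ) : φ τ = φ τ' := by
  have hsum := hY.sum_neighbors_sub_sq hd φ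
  rw [h, sub_self, mul_zero] at hsum
  have hterm := (sum_eq_zero_iff_of_nonneg fun τ' hτ' => mul_nonneg
    (hY.m_pos (mem_neighbors.1 hτ').2).le (sq_nonneg _)).1
    ((sum_eq_zero_iff_of_nonneg fun _ _ => sum_nonneg fun τ' hτ' => mul_nonneg
      (hY.m_pos (mem_neighbors.1 hτ').2).le (sq_nonneg _)).1 hsum τ hτ) τ' hτ'
  rw [mul_eq_zero, or_iff_right (hY.m_pos (mem_neighbors.1 hτ').2).ne', sq_eq_zero_iff,
    sub_eq_zero] at hterm
  exact hterm

lemma exists_eq_const_of_connected (hconn : Y.skeleton.Connected) {φ : Finset V → ℝ}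
    (h : ∀ τ ∈ Y.K 1, ∀ τ' ∈ Y.neighbors τ, φ τ = φ τ') : ∃ c, ∀ σ ∈ Y.K 1, φ σ = c := by
  have hadj {a b} (hab : Y.skeleton.Adj a b) : φ {a.1} = φ {b.1} := by
    refine h _ (mem_K.2 ⟨a.2, card_singleton _⟩) _ (mem_neighbors.2
      ⟨mem_K.2 ⟨b.2, card_singleton _⟩, mem_K.2 ⟨?_, ?_⟩⟩)
    · rw [← insert_eq]; exact hab.2
    · rw [← insert_eq, card_pair fun hab' => hab.1 (Subtype.ext hab')]
  have hwalk {a b} (p : Y.skeleton.Walk a b) : φ {a.1} = φ {b.1} := by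
    induction p with
    | nil => rfl
    | cons hab _ ih => exact (hadj hab).trans ih
  obtain ⟨v₀⟩ := hconn.nonempty
  refine ⟨φ {v₀.1}, fun σ hσ => ?_⟩
  obtain ⟨v, rfl⟩ := card_eq_one.1 (mem_K.1 hσ).2
  exact hwalk (hconn.preconnected ⟨v, (mem_K.1 hσ).1⟩ v₀).some

lemma IsWSC.normSq_eq_zero_of_eq_const (hY : Y.IsWSC d) {φ : Finset V → ℝ} {c : ℝ}
    (hz : Y.cochainZero 1 φ) (hc : ∀ σ ∈ Y.K 1, φ σ = c) : Y.normSq 1 φ = 0 := by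
  have : c * Y.m ∅ = 0 := by
    rw [hY.m_empty, mul_sum, ← hz]
    exact sum_congr rfl fun σ hσ => by rw [hc σ hσ, mul_comm]
  have hc0 : c = 0 := (mul_eq_zero.1 this).resolve_right (hY.m_pos (mem_K.2 ⟨hY.1, rfl⟩)).ne'
  exact sum_eq_zero fun σ hσ => by rw [hc σ hσ, hc0]; ring

lemma IsWSC.edgeForm_lt_normSq (hY : Y.IsWSC d) (hd : 1 ≤ d) (hconn : Y.skeleton.Connected)
    {φ : Finset V → ℝ} (hz : Y.cochainZero 1 φ) (hne : Y.normSq 1 φ ≠ 0) :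
    Y.edgeForm φ φ < Y.normSq 1 φ := by
  refine (hY.edgeForm_le_normSq hd φ).lt_of_ne fun h => hne ?_
  obtain ⟨c, hc⟩ := exists_eq_const_of_connected hconn fun τ hτ τ' hτ' =>
    hY.eq_of_edgeForm_eq_normSq hd h hτ hτ'
  exact hY.normSq_eq_zero_of_eq_const hz hc

lemma inn_comm (c : ℕ) (φ ψ : Finset V → ℝ) : Y.inn c φ ψ = Y.inn c ψ φ :=
  sum_congr rfl fun _ _ => by ring

lemma normSq_add_smul (c : ℕ) (φ ψ : Finset V → ℝ) (t : ℝ) :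
    Y.normSq c (φ + t • ψ) = Y.normSq c φ + 2 * t * Y.inn c φ ψ + t ^ 2 * Y.normSq c ψ := by
  simp only [normSq, inn, Pi.add_apply, Pi.smul_apply, smul_eq_mul, mul_sum, ← sum_add_distrib]
  exact sum_congr rfl fun _ _ => by ring

lemma edgeForm_add_smul (φ ψ : Finset V → ℝ) (t : ℝ) :
    Y.edgeForm (φ + t • ψ) (φ + t • ψ)
      = Y.edgeForm φ φ + t * (Y.edgeForm φ ψ + Y.edgeForm ψ φ) + t ^ 2 * Y.edgeForm ψ ψ := by
  simp only [edgeForm, Pi.add_apply, Pi.smul_apply, smul_eq_mul, mul_sum, ← sum_add_distrib]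
  exact sum_congr rfl fun _ _ => sum_congr rfl fun _ _ => by ring

lemma cochainZero_add_smul {c : ℕ} {φ ψ : Finset V → ℝ} (hφ : Y.cochainZero c φ)
    (hψ : Y.cochainZero c ψ) (t : ℝ) : Y.cochainZero c (φ + t • ψ) := by
  have hφ' : ∑ σ ∈ Y.K c, Y.m σ * φ σ = 0 := hφ
  have hψ' : ∑ σ ∈ Y.K c, Y.m σ * ψ σ = 0 := hψ
  simp only [cochainZero, Pi.add_apply, Pi.smul_apply, smul_eq_mul, mul_add, sum_add_distrib,
    mul_left_comm _ t, ← mul_sum, hφ', hψ', mul_zero, add_zero]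

lemma IsWSC.normSq_Mup'_one_eq_sq (hY : Y.IsWSC d) (hd : 1 ≤ d) {φ : Finset V → ℝ}
    (hφ : Y.normSq 1 φ = 1) (hz : Y.cochainZero 1 φ)
    (hmax : ∀ ψ, Y.cochainZero 1 ψ → Y.edgeForm ψ ψ ≤ Y.edgeForm φ φ * Y.normSq 1 ψ) :
    Y.normSq 1 (Y.Mup' 1 φ) = Y.edgeForm φ φ ^ 2 := by
  set A := Y.Mup' 1 φ
  set M := Y.edgeForm φ φ
  have hAφ : Y.edgeForm A φ = Y.normSq 1 A := (hY.inn_Mup'_one φ A).symm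
  have hφA : Y.inn 1 φ A = M := by rw [inn_comm, hY.inn_Mup'_one]
  have hquad (t : ℝ) : 0 ≤ (M * Y.normSq 1 A - Y.edgeForm A A) * (t * t)
      + 2 * (M ^ 2 - Y.normSq 1 A) * t + 0 := by
    have := hmax _ (cochainZero_add_smul hz (hY.cochainZero_Mup'_one hd hz) t)
    rw [edgeForm_add_smul, normSq_add_smul, edgeForm_comm φ A, hAφ, hφA, hφ] at this
    nlinarith
  have := discrim_le_zero hquad
  rw [discrim] at this
  nlinarith

lemma normSq_smul (c : ℕ) (t : ℝ) (φ : Finset V → ℝ) :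
    Y.normSq c (t • φ) = t ^ 2 * Y.normSq c φ := by
  simp only [normSq, inn, Pi.smul_apply, smul_eq_mul, mul_sum]
  exact sum_congr rfl fun _ _ => by ring

lemma edgeForm_smul (t : ℝ) (φ : Finset V → ℝ) :
    Y.edgeForm (t • φ) (t • φ) = t ^ 2 * Y.edgeForm φ φ := by
  simp only [edgeForm, Pi.smul_apply, smul_eq_mul, mul_sum]
  exact sum_congr rfl fun _ _ => sum_congr rfl fun _ _ => by ring

lemma cochainZero_smul {c : ℕ} {φ : Finset V → ℝ} (hφ : Y.cochainZero c φ) (t : ℝ) :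
    Y.cochainZero c (t • φ) := by
  simpa using cochainZero_add_smul (φ := 0) (by simp [cochainZero]) hφ t

lemma normSq_indicator (c : ℕ) (φ : Finset V → ℝ) :
    Y.normSq c ((Y.K c : Set (Finset V)).indicator φ) = Y.normSq c φ :=
  sum_congr rfl fun σ hσ => by rw [Set.indicator_of_mem (mem_coe.2 hσ)]

lemma edgeForm_indicator (φ : Finset V → ℝ) :
    Y.edgeForm ((Y.K 1 : Set (Finset V)).indicator φ) ((Y.K 1 : Set (Finset V)).indicator φ)
      = Y.edgeForm φ φ :=
  sum_congr rfl fun τ hτ => sum_congr rfl fun τ' hτ' => by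
    rw [Set.indicator_of_mem (mem_coe.2 hτ), Set.indicator_of_mem
      (mem_coe.2 (mem_neighbors.1 hτ').1)]

lemma cochainZero_indicator {c : ℕ} {φ : Finset V → ℝ} (hφ : Y.cochainZero c φ) :
    Y.cochainZero c ((Y.K c : Set (Finset V)).indicator φ) :=
  (sum_congr rfl fun σ hσ => by rw [Set.indicator_of_mem (mem_coe.2 hσ)]).trans hφ

lemma IsWSC.edgeForm_eq_zero_of_normSq_eq_zero (hY : Y.IsWSC d) {φ : Finset V → ℝ}
    (h : Y.normSq 1 φ = 0) : Y.edgeForm φ φ = 0 :=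
  sum_eq_zero fun _ hτ => sum_eq_zero fun _ _ => by
    rw [hY.eq_zero_of_normSq_eq_zero h hτ]; ring

/-- Vanishing off the vertices confines this set to a product of compact intervals. -/
lemma IsWSC.isCompact_unit_cochainZero (hY : Y.IsWSC d) :
    IsCompact {φ : Finset V → ℝ | Y.normSq 1 φ = 1 ∧ Y.cochainZero 1 φ ∧ ∀ σ ∉ Y.K 1, φ σ = 0} := by
  have hclosed : IsClosed
      {φ : Finset V → ℝ | Y.normSq 1 φ = 1 ∧ Y.cochainZero 1 φ ∧ ∀ σ ∉ Y.K 1, φ σ = 0} := by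
    refine (isClosed_eq (by unfold normSq inn; fun_prop) continuous_const).inter
      ((isClosed_eq (by fun_prop) continuous_const).inter ?_)
    have : {φ : Finset V → ℝ | ∀ σ ∉ Y.K 1, φ σ = 0} = ⋂ σ ∉ Y.K 1, {φ | φ σ = 0} := by
      ext; simp
    exact (this ▸ isClosed_biInter fun σ _ => isClosed_eq (continuous_apply σ) continuous_const :
      IsClosed {φ : Finset V → ℝ | ∀ σ ∉ Y.K 1, φ σ = 0})
  refine (isCompact_univ_pi fun σ => isCompact_Icc (a := -√(1 / Y.m σ)) (b := √(1 / Y.m σ)))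
    |>.of_isClosed_subset hclosed fun φ ⟨hφ1, _, hφ0⟩ σ _ => abs_le.1 ?_
  by_cases hσ : σ ∈ Y.K 1
  · refine Real.abs_le_sqrt ?_
    rw [le_div_iff₀ (hY.m_pos hσ), ← hφ1, sq]
    exact single_le_sum (f := fun σ => Y.m σ * (φ σ * φ σ))
      (fun σ hσ => mul_nonneg (hY.m_pos hσ).le (mul_self_nonneg _)) hσ |>.trans_eq' (by ring)
  · rw [hφ0 σ hσ, abs_zero]
    exact Real.sqrt_nonneg _

lemma IsWSC.exists_isMax_edgeForm (hY : Y.IsWSC d) {ψ₀ : Finset V → ℝ}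
    (hz : Y.cochainZero 1 ψ₀) (hne : Y.normSq 1 ψ₀ ≠ 0) :
    ∃ φ, Y.normSq 1 φ = 1 ∧ Y.cochainZero 1 φ ∧
      ∀ ψ, Y.cochainZero 1 ψ → Y.edgeForm ψ ψ ≤ Y.edgeForm φ φ * Y.normSq 1 ψ := by
  have normalize (ψ : Finset V → ℝ) (hz : Y.cochainZero 1 ψ) (hne : Y.normSq 1 ψ ≠ 0) :
      let ψ₁ := (√(Y.normSq 1 ψ))⁻¹ • (Y.K 1 : Set (Finset V)).indicator ψ
      (Y.normSq 1 ψ₁ = 1 ∧ Y.cochainZero 1 ψ₁ ∧ ∀ σ ∉ Y.K 1, ψ₁ σ = 0) ∧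
        Y.edgeForm ψ₁ ψ₁ = Y.edgeForm ψ ψ / Y.normSq 1 ψ := by
    have hsq : (√(Y.normSq 1 ψ))⁻¹ ^ 2 = (Y.normSq 1 ψ)⁻¹ := by
      rw [inv_pow, Real.sq_sqrt (hY.normSq_nonneg 1 ψ)]
    refine ⟨⟨?_, cochainZero_smul (cochainZero_indicator hz) _, fun σ hσ => ?_⟩, ?_⟩
    · rw [normSq_smul, normSq_indicator, hsq, inv_mul_cancel₀ hne]
    · simp [Set.indicator_of_notMem (mt mem_coe.1 hσ)]
    · rw [edgeForm_smul, edgeForm_indicator, hsq, inv_mul_eq_div]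
  have hcont : Continuous fun φ => Y.edgeForm φ φ := by unfold edgeForm; fun_prop
  obtain ⟨φ, hφ, hmax⟩ := hY.isCompact_unit_cochainZero.exists_isMaxOn
    ⟨_, (normalize ψ₀ hz hne).1⟩ hcont.continuousOn
  refine ⟨φ, hφ.1, hφ.2.1, fun ψ hψ => ?_⟩
  by_cases hψ0 : Y.normSq 1 ψ = 0
  · rw [hY.edgeForm_eq_zero_of_normSq_eq_zero hψ0, hψ0, mul_zero]
  · have := isMaxOn_iff.1 hmax _ (normalize ψ hψ hψ0).1
    rw [(normalize ψ hψ hψ0).2] at this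
    exact (div_le_iff₀ ((hY.normSq_nonneg 1 ψ).lt_of_ne' hψ0)).1 this

theorem IsWSC.one_sub_mul_edgeForm_le_of_links (hY : Y.IsWSC d) (hd : 2 ≤ d)
    (hconn : Y.skeleton.Connected) {μ : ℝ} (hμ : μ < 1)
    (hlinks : ∀ u ∈ Y.K 1, ∀ ψ, (Y.link u).cochainZero 1 ψ →
      (Y.link u).edgeForm ψ ψ ≤ μ * (Y.link u).normSq 1 ψ)
    {ψ : Finset V → ℝ} (hψ : Y.cochainZero 1 ψ) :
    (1 - μ) * Y.edgeForm ψ ψ ≤ μ * Y.normSq 1 ψ := by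
  by_cases hψ0 : Y.normSq 1 ψ = 0
  · rw [hY.edgeForm_eq_zero_of_normSq_eq_zero hψ0, hψ0, mul_zero, mul_zero]
  obtain ⟨φ, hφ1, hφz, hmax⟩ := hY.exists_isMax_edgeForm hψ hψ0
  set M := Y.edgeForm φ φ
  have hgarland := hY.edgeForm_le_of_links hd hlinks φ
  rw [hY.normSq_Mup'_one_eq_sq (by omega) hφ1 hφz hmax, hφ1] at hgarland
  have hM1 : M < 1 := hφ1 ▸ hY.edgeForm_lt_normSq (by omega) hconn hφz (by simp [hφ1])
  -- dividing `M - M ^ 2 ≤ μ * (1 - M ^ 2)` by `1 - M > 0`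
  have hM : M * (1 - μ) ≤ μ := by nlinarith
  calc (1 - μ) * Y.edgeForm ψ ψ ≤ (1 - μ) * (M * Y.normSq 1 ψ) :=
        mul_le_mul_of_nonneg_left (hmax ψ hψ) (by linarith)
    _ = M * (1 - μ) * Y.normSq 1 ψ := by ring
    _ ≤ μ * Y.normSq 1 ψ := mul_le_mul_of_nonneg_right hM (hY.normSq_nonneg 1 ψ)

theorem IsWSC.mul_normSq_le_of_links (hY : Y.IsWSC d) (hd : 2 ≤ d) {ν : ℝ} (hν : ν ≤ 0)
    (hlinks : ∀ u ∈ Y.K 1, ∀ ψ, (Y.link u).cochainZero 1 ψ →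
      ν * (Y.link u).normSq 1 ψ ≤ (Y.link u).edgeForm ψ ψ)
    (ψ : Finset V → ℝ) :
    ν * Y.normSq 1 ψ ≤ (1 - ν) * Y.edgeForm ψ ψ := by
  have hgarland := hY.le_edgeForm_of_links hd hlinks ψ
  have hcs := hY.inn_sq_le 1 (Y.Mup' 1 ψ) ψ
  rw [hY.inn_Mup'_one] at hcs
  have hle := hY.edgeForm_le_normSq (by omega) ψ
  have hP := hY.normSq_nonneg 1 ψ
  rcases hle.eq_or_lt with heq | hlt
  · rw [heq]
    nlinarith
  · have hkey : 0 ≤ ((1 - ν) * Y.edgeForm ψ ψ - ν * Y.normSq 1 ψ)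
        * (Y.normSq 1 ψ - Y.edgeForm ψ ψ) := by
      nlinarith [mul_le_mul_of_nonneg_right hgarland hP,
        mul_le_mul_of_nonneg_left hcs (by linarith : 0 ≤ 1 - ν)]
    linarith [(mul_nonneg_iff_of_pos_right (sub_pos.2 hlt)).1 hkey]

lemma IsWSC.secondEig_le (hY : Y.IsWSC d) {c : ℝ} (hc : 0 ≤ c)
    (h : ∀ ψ, Y.cochainZero 1 ψ → Y.edgeForm ψ ψ ≤ c * Y.normSq 1 ψ) : Y.secondEig ≤ c := by
  refine Real.sSup_le ?_ hc
  rintro r ⟨ψ, hne, hψ, rfl⟩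
  rw [hY.inn_Mup'_one, div_le_iff₀ ((hY.normSq_nonneg 1 ψ).lt_of_ne' hne)]
  exact h ψ hψ

lemma IsWSC.le_smallestEig (hY : Y.IsWSC d) {c : ℝ} (hc : c ≤ 0)
    (h : ∀ ψ, c * Y.normSq 1 ψ ≤ Y.edgeForm ψ ψ) : c ≤ Y.smallestEig := by
  refine Real.le_sInf ?_ hc
  rintro r ⟨ψ, hne, rfl⟩
  rw [hY.inn_Mup'_one, le_div_iff₀ ((hY.normSq_nonneg 1 ψ).lt_of_ne' hne)]
  exact h ψ

lemma IsWSC.edgeForm_le_secondEig_mul (hY : Y.IsWSC d) (hd : 1 ≤ d) {ψ : Finset V → ℝ}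
    (hψ : Y.cochainZero 1 ψ) : Y.edgeForm ψ ψ ≤ Y.secondEig * Y.normSq 1 ψ := by
  by_cases hψ0 : Y.normSq 1 ψ = 0
  · rw [hY.edgeForm_eq_zero_of_normSq_eq_zero hψ0, hψ0, mul_zero]
  have hP := (hY.normSq_nonneg 1 ψ).lt_of_ne' hψ0
  have : Y.inn 1 (Y.Mup' 1 ψ) ψ / Y.normSq 1 ψ ≤ Y.secondEig := by
    refine le_csSup ⟨1, ?_⟩ ⟨ψ, hψ0, hψ, rfl⟩
    rintro r ⟨φ, hne, -, rfl⟩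
    rw [hY.inn_Mup'_one, div_le_one ((hY.normSq_nonneg 1 φ).lt_of_ne' hne)]
    exact hY.edgeForm_le_normSq hd φ
  rwa [hY.inn_Mup'_one, div_le_iff₀ hP] at this

lemma IsWSC.smallestEig_mul_le_edgeForm (hY : Y.IsWSC d) (hd : 1 ≤ d) (ψ : Finset V → ℝ) :
    Y.smallestEig * Y.normSq 1 ψ ≤ Y.edgeForm ψ ψ := by
  by_cases hψ0 : Y.normSq 1 ψ = 0
  · rw [hY.edgeForm_eq_zero_of_normSq_eq_zero hψ0, hψ0, mul_zero]
  have hP := (hY.normSq_nonneg 1 ψ).lt_of_ne' hψ0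
  have : Y.smallestEig ≤ Y.inn 1 (Y.Mup' 1 ψ) ψ / Y.normSq 1 ψ := by
    refine csInf_le ⟨-1, ?_⟩ ⟨ψ, hψ0, rfl⟩
    rintro r ⟨φ, hne, rfl⟩
    rw [hY.inn_Mup'_one, le_div_iff₀ ((hY.normSq_nonneg 1 φ).lt_of_ne' hne), neg_one_mul]
    exact hY.neg_normSq_le_edgeForm hd φ
  rwa [hY.inn_Mup'_one, le_div_iff₀ hP] at this

theorem IsWSC.secondEig_le_of_links (hY : Y.IsWSC d) (hd : 2 ≤ d)
    (hconn : Y.skeleton.Connected) {μ : ℝ} (hμ0 : 0 ≤ μ) (hμ1 : μ < 1)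
    (hlinks : ∀ u ∈ Y.K 1, (Y.link u).secondEig ≤ μ) : Y.secondEig ≤ μ / (1 - μ) := by
  have h1μ : 0 < 1 - μ := by linarith
  refine hY.secondEig_le (div_nonneg hμ0 h1μ.le) fun ψ hψ => ?_
  have := hY.one_sub_mul_edgeForm_le_of_links hd hconn hμ1 (fun u hu φ hφ => ?_) hψ
  · rw [div_mul_eq_mul_div, le_div_iff₀ h1μ]
    linarith
  · have hL := hY.link hu (by omega)
    exact (hL.edgeForm_le_secondEig_mul (by omega) hφ).trans
      (mul_le_mul_of_nonneg_right (hlinks u hu) (hL.normSq_nonneg 1 φ))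

theorem IsWSC.le_smallestEig_of_links (hY : Y.IsWSC d) (hd : 2 ≤ d) {ν : ℝ} (hν : ν ≤ 0)
    (hlinks : ∀ u ∈ Y.K 1, ν ≤ (Y.link u).smallestEig) : ν / (1 - ν) ≤ Y.smallestEig := by
  have h1ν : 0 < 1 - ν := by linarith
  refine hY.le_smallestEig (div_nonpos_of_nonpos_of_nonneg hν h1ν.le) fun ψ => ?_
  have := hY.mul_normSq_le_of_links hd hν (fun u hu φ _ => ?_) ψ
  · rw [div_mul_eq_mul_div, div_le_iff₀ h1ν]
    linarith
  · have hL := hY.link hu (by omega)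
    exact (mul_le_mul_of_nonneg_right (hlinks u hu) (hL.normSq_nonneg 1 φ)).trans
      (hL.smallestEig_mul_le_edgeForm (by omega) φ)

variable {X : WSC V} {n k : ℕ} {lam : ℝ}

lemma secondEig_link_le_mu {τ : Finset V} (hτ : τ ∈ X.K k) : (X.link τ).secondEig ≤ X.mu k :=
  le_csSup (BddAbove.mono (by rintro _ ⟨τ, hτ, rfl⟩; exact ⟨τ, hτ, rfl⟩)
    ((X.K k).finite_toSet.image fun τ => (X.link τ).secondEig).bddAbove) ⟨τ, hτ, rfl⟩

lemma nu_le_smallestEig_link {τ : Finset V} (hτ : τ ∈ X.K k) :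
    X.nu k ≤ (X.link τ).smallestEig :=
  csInf_le (BddBelow.mono (by rintro _ ⟨τ, hτ, rfl⟩; exact ⟨τ, hτ, rfl⟩)
    ((X.K k).finite_toSet.image fun τ => (X.link τ).smallestEig).bddBelow) ⟨τ, hτ, rfl⟩

lemma mu_le {c : ℝ} (hc : 0 ≤ c) (h : ∀ τ ∈ X.K k, (X.link τ).secondEig ≤ c) : X.mu k ≤ c :=
  Real.sSup_le (fun _ ⟨τ, hτ, hr⟩ => hr ▸ h τ hτ) hc

lemma le_nu {c : ℝ} (hc : c ≤ 0) (h : ∀ τ ∈ X.K k, c ≤ (X.link τ).smallestEig) : c ≤ X.nu k :=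
  Real.le_sInf (fun _ ⟨τ, hτ, hr⟩ => hr ▸ h τ hτ) hc

theorem IsWSC.mu_le_of_mu_succ_le (hX : X.IsWSC n) (hconn : X.LinksConnected n) (h0 : 0 < lam)
    (hk : k + 2 ≤ n) (h : X.mu (k + 1) ≤ lam / (1 + ((k + 1 : ℕ) : ℝ) * lam)) :
    X.mu k ≤ lam / (1 + (k : ℝ) * lam) := by
  set μ := lam / (1 + ((k + 1 : ℕ) : ℝ) * lam)
  have hμ1 : μ < 1 := by
    rw [div_lt_one (by positivity)]
    push_cast
    nlinarith [(by positivity : (0 : ℝ) ≤ k * lam)]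
  have hμ : μ / (1 - μ) = lam / (1 + (k : ℝ) * lam) := by
    simp only [μ]
    push_cast
    rw [one_sub_div (by positivity), div_div_div_cancel_right₀ (by positivity)]
    ring_nf
  refine mu_le (by positivity) fun τ hτ => hμ ▸ ?_
  refine (hX.link hτ (by omega)).secondEig_le_of_links (by omega) (hconn k (by omega) τ hτ)
    (by positivity) hμ1 fun u hu => ?_
  rw [link_link hX (mem_K.1 hu).1]
  exact (secondEig_link_le_mu ((mem_link_K hτ).1 hu).2).trans h

theorem IsWSC.neg_le_nu_of_neg_le_nu_succ (hX : X.IsWSC n) (h0 : 0 < lam) (hk : k + 2 ≤ n)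
    (h : -(lam / (1 + ((k + 1 : ℕ) : ℝ) * lam)) ≤ X.nu (k + 1)) :
    -(lam / (1 + (k : ℝ) * lam)) ≤ X.nu k := by
  set ν := -(lam / (1 + ((k + 1 : ℕ) : ℝ) * lam))
  have hν : ν / (1 - ν) = -(lam / (1 + ((k + 2 : ℕ) : ℝ) * lam)) := by
    simp only [ν]
    push_cast
    rw [sub_neg_eq_add, one_add_div (by positivity), neg_div,
      div_div_div_cancel_right₀ (by positivity)]
    ring_nf
  refine le_nu (neg_nonpos.2 (by positivity)) fun τ hτ => le_trans ?_
    ((hX.link hτ (by omega)).le_smallestEig_of_links (ν := ν) (by omega)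
      (neg_nonpos.2 (by positivity)) fun u hu => ?_)
  · rw [hν, neg_le_neg_iff]
    gcongr
    simp
  · rw [link_link hX (mem_K.1 hu).1]
    exact h.trans (nu_le_smallestEig_link ((mem_link_K hτ).1 hu).2)

theorem IsWSC.mu_le_of_mu_top_le (hX : X.IsWSC n) (hconn : X.LinksConnected n) (h0 : 0 < lam)
    (htop : X.mu (n - 1) ≤ lam / (1 + ((n - 1 : ℕ) : ℝ) * lam)) (hk : k < n) :
    X.mu k ≤ lam / (1 + (k : ℝ) * lam) :=
  Nat.decreasingInduction (motive := fun k _ => X.mu k ≤ lam / (1 + (k : ℝ) * lam))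
    (fun _ hk' ih => hX.mu_le_of_mu_succ_le hconn h0 (by omega) ih) htop (by omega)

theorem IsWSC.neg_le_nu_of_neg_le_nu_top (hX : X.IsWSC n) (h0 : 0 < lam)
    (htop : -(lam / (1 + ((n - 1 : ℕ) : ℝ) * lam)) ≤ X.nu (n - 1)) (hk : k < n) :
    -(lam / (1 + (k : ℝ) * lam)) ≤ X.nu k :=
  Nat.decreasingInduction (motive := fun k _ => -(lam / (1 + (k : ℝ) * lam)) ≤ X.nu k)
    (fun _ hk' ih => hX.neg_le_nu_of_neg_le_nu_succ h0 (by omega) ih) htop (by omega)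

end WSC

open WSC
theorem expander_from_top_links_general {V : Type*} [DecidableEq V] (X : WSC V) (n : ℕ)
    (hX : X.IsWSC n) (hconn : X.LinksConnected n) (lam : ℝ) (h0 : 0 < lam) :
    (X.mu (n - 1) ≤ lam / (1 + ((n - 1 : ℕ) : ℝ) * lam) → X.OneSided n lam) ∧
    (X.mu (n - 1) ≤ lam / (1 + ((n - 1 : ℕ) : ℝ) * lam) →
      -(lam / (1 + ((n - 1 : ℕ) : ℝ) * lam)) ≤ X.nu (n - 1) → X.TwoSided n lam) := by
  have hle (k : ℕ) : lam / (1 + (k : ℝ) * lam) ≤ lam :=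
    div_le_self h0.le (le_add_of_nonneg_right (by positivity))
  have hmu (hμ : X.mu (n - 1) ≤ lam / (1 + ((n - 1 : ℕ) : ℝ) * lam)) (k : ℕ) (hk : k < n) :
      X.mu k ≤ lam :=
    (hX.mu_le_of_mu_top_le hconn h0 hμ hk).trans (hle k)
  refine ⟨hmu, fun hμ hν k hk => ⟨hmu hμ k hk, ?_⟩⟩
  exact (neg_le_neg (hle k)).trans (hX.neg_le_nu_of_neg_le_nu_top h0 hν hk)

/-- Suppose all links of `X` of dimension `≥ 1` (including `X` itself)
are connected, and let `0 < λ ≤ 1`. If `μ_{n-1} ≤ λ/(1+(n-1)λ)` then `X` is a one-sided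
`λ`-local spectral expander; if moreover `-λ/(1+(n-1)λ) ≤ ν_{n-1}` then `X` is a
two-sided `λ`-local spectral expander. -/
theorem expander_from_top_links {V : Type*} [DecidableEq V] (X : WSC V) (n : ℕ)
    (hX : X.IsWSC n) (hconn : X.LinksConnected n) (lam : ℝ) (h0 : 0 < lam)
    (h1 : lam ≤ 1) :
    (X.mu (n - 1) ≤ lam / (1 + ((n - 1 : ℕ) : ℝ) * lam) → X.OneSided n lam) ∧
    (X.mu (n - 1) ≤ lam / (1 + ((n - 1 : ℕ) : ℝ) * lam) →
      -(lam / (1 + ((n - 1 : ℕ) : ℝ) * lam)) ≤ X.nu (n - 1) → X.TwoSided n lam) :=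
  expander_from_top_links_general X n hX hconn lam h0
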